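/- Assume s_i ≠ s'_i for every i. Then the minimum, over all multicuts C for L, of w(C) equals the minimum of w(C) taken over all pairs (c, C) where c : V → ℕ is a function with c(s_i) ≠ c(s'_i) for every i, and C ⊆ E is a set of edges such that for any two terminals t, t' ∈ T(L) with c(t) ≠ c(t'), t and t' lie in different connected components of G' = (V, E \ C). -/
import Mathlib


open scoped Classical

/-- Reduction from minimum multicut to minimum multi-cluster cut (Lemma 1):
assuming `s i ≠ s' i` for every `i`, the minimum weight of a multicut for `L`
equals the minimum weight of an edge set `C` for which there is a clustering
`c` of the vertices with `c (s i) ≠ c (s' i)` for every `i`, such that any two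
terminals with different cluster values lie in different connected components
of `(V, E \ C)`. -/
theorem minMulticut_eq_minMultiClusterCut
    {V : Type*} [Fintype V] [DecidableEq V]
    (G : SimpleGraph V) (w : Sym2 V → ℕ)
    (hw : ∀ e ∈ G.edgeSet, 0 < w e)
    (k : ℕ) (L : Fin k → V × V)
    (hL : ∀ i, (L i).1 ≠ (L i).2) :
    sInf {x : ℕ | ∃ C : Finset (Sym2 V), ↑C ⊆ G.edgeSet ∧
        (∀ i, ¬ (G.deleteEdges ↑C).Reachable (L i).1 (L i).2) ∧
        x = ∑ e ∈ C, w e}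
    = sInf {x : ℕ | ∃ (c : V → ℕ) (C : Finset (Sym2 V)), ↑C ⊆ G.edgeSet ∧
        (∀ i, c (L i).1 ≠ c (L i).2) ∧
        (∀ t ∈ {v : V | ∃ i, v = (L i).1 ∨ v = (L i).2},
         ∀ t' ∈ {v : V | ∃ i, v = (L i).1 ∨ v = (L i).2},
          c t ≠ c t' → ¬ (G.deleteEdges ↑C).Reachable t t') ∧
        x = ∑ e ∈ C, w e} := by
  congr 1
  ext x
  constructor
  · rintro ⟨C, hC, hcut, rfl⟩
    haveI : Finite (G.deleteEdges ↑C).ConnectedComponent :=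
      Finite.of_surjective ((G.deleteEdges ↑C).connectedComponentMk) (Quot.exists_rep)
    obtain ⟨f, hf⟩ := exists_injective_nat ((G.deleteEdges ↑C).ConnectedComponent)
    refine ⟨fun v => f ((G.deleteEdges ↑C).connectedComponentMk v), C, hC, ?_, ?_, rfl⟩
    · intro i h
      exact hcut i (SimpleGraph.ConnectedComponent.eq.mp (hf h))
    · intro t _ t' _ hne hr
      exact hne (congrArg f (SimpleGraph.ConnectedComponent.sound hr))
  · rintro ⟨c, C, hC, hcL, hterm, rfl⟩
    exact ⟨C, hC, fun i => hterm _ ⟨i, Or.inl rfl⟩ _ ⟨i, Or.inr rfl⟩ (hcL i), rfl⟩
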